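/- Let (x, y, s, t) ∈ ℤ⁴ satisfy x·s − y·t = 1 or x·s − y·t = −1. Then there exists a finite sequence of moves, each of which is either A_m(x, y, s, t) = (x, y + m·x, s + m·t, t) for some integer m or B_n(x, y, s, t) = (x + n·y, y, s, t + n·s) for some integer n, transforming (x, y, s, t) into a quadruple of the form (x′, 0, s′, 0); moreover any such endpoint satisfies x′·s′ = x·s − y·t, hence x′ and s′ both lie in {1, −1}. (This is the algebraic content of the paper's Lemma: if a pair of surgeries (a, b; x/y, s/t) on a Hopf link a ∪ b satisfies |xs − yt| = 1, then it can be realized by a finite sequence of alternate twistings along a and b.) -/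

import Mathlib

/-- `m`-twist along the component `a` of a Hopf link, acting on the quadruple
`(x, y, s, t)` of surgery coefficients `(x/y, s/t)`. -/
def twistA (m : ℤ) (p : ℤ × ℤ × ℤ × ℤ) : ℤ × ℤ × ℤ × ℤ :=
  (p.1, p.2.1 + m * p.1, p.2.2.1 + m * p.2.2.2, p.2.2.2)

/-- `n`-twist along the component `b` of a Hopf link. -/
def twistB (n : ℤ) (p : ℤ × ℤ × ℤ × ℤ) : ℤ × ℤ × ℤ × ℤ :=
  (p.1 + n * p.2.1, p.2.1, p.2.2.1, p.2.2.2 + n * p.2.2.1)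

/-- One twist move: either `A_m` for some integer `m` or `B_n` for some integer `n`. -/
def quadStep (p q : ℤ × ℤ × ℤ × ℤ) : Prop :=
  (∃ m : ℤ, q = twistA m p) ∨ (∃ n : ℤ, q = twistB n p)

/-!
Read `(x, y, s, t)` as the matrix `!![x, y; t, s]`: the twist `A_m` adds `m` times the first
column to the second and `B_n` adds `n` times the second column to the first, so both preserve
the determinant `x * s - y * t`. Euclid's algorithm on the first row, run by alternating
twists, reaches a quadruple with `y = 0`; there `x * s = ±1`, so `x` and `s` are units, and one
more `B`-twist clears `t`.
-/

def quadDet (p : ℤ × ℤ × ℤ × ℤ) : ℤ := p.1 * p.2.2.1 - p.2.1 * p.2.2.2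

theorem quadStep_twistA (m : ℤ) (p : ℤ × ℤ × ℤ × ℤ) : quadStep p (twistA m p) :=
  Or.inl ⟨m, rfl⟩

theorem quadStep_twistB (n : ℤ) (p : ℤ × ℤ × ℤ × ℤ) : quadStep p (twistB n p) :=
  Or.inr ⟨n, rfl⟩

theorem quadStep.quadDet_eq {p q : ℤ × ℤ × ℤ × ℤ} (h : quadStep p q) :
    quadDet q = quadDet p := by
  rcases h with ⟨m, rfl⟩ | ⟨n, rfl⟩ <;> simp only [quadDet, twistA, twistB] <;> ring

theorem quadDet_eq_of_reflTransGen {p q : ℤ × ℤ × ℤ × ℤ}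
    (h : Relation.ReflTransGen quadStep p q) : quadDet q = quadDet p := by
  induction h with
  | refl => rfl
  | tail _ hstep ih => rw [hstep.quadDet_eq, ih]

theorem exists_reflTransGen_snd_eq_zero (p : ℤ × ℤ × ℤ × ℤ) :
    ∃ q, Relation.ReflTransGen quadStep p q ∧ q.2.1 = 0 := by
  induction hk : p.2.1.natAbs using Nat.strong_induction_on generalizing p with
  | _ k ih =>
    by_cases hy : p.2.1 = 0
    · exact ⟨p, .refl, hy⟩
    set r := p.1 % p.2.1 with hr
    set p₁ := twistB (-(p.1 / p.2.1)) p
    have hp₁ : p₁.1 = r ∧ p₁.2.1 = p.2.1 :=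
      ⟨by simp only [p₁, twistB, hr, Int.emod_def]; ring, rfl⟩
    have hr_nonneg : 0 ≤ r := Int.emod_nonneg _ hy
    have hr_lt : r < p.2.1.natAbs := Int.emod_lt _ hy
    by_cases hr0 : r = 0
    · -- `p₁ = (0, y, _, _)`: move `y` into the first slot, then subtract it from the second.
      refine ⟨twistA (-1) (twistB 1 p₁),
        .tail (.tail (.single (quadStep_twistB _ p)) (quadStep_twistB 1 p₁))
          (quadStep_twistA _ _), ?_⟩
      simp only [twistA, twistB, hp₁, hr0]
      ring
    · set p₂ := twistA (-(p₁.2.1 / p₁.1)) p₁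
      have hp₂ : p₂.2.1 = p.2.1 % r := by simp only [p₂, twistA, hp₁, Int.emod_def]; ring
      have hlt : p₂.2.1.natAbs < k := by
        have hmod_nonneg := Int.emod_nonneg p.2.1 hr0
        have hmod_lt := Int.emod_lt p.2.1 hr0
        rw [hp₂, ← hk]
        omega
      obtain ⟨q, hq, hq0⟩ := ih _ hlt p₂ rfl
      exact ⟨q, .head (quadStep_twistB _ p) (.head (quadStep_twistA _ p₁) hq), hq0⟩

theorem twistB_eq_of_snd_eq_zero {x s t : ℤ} (hs : IsUnit s) :
    twistB (-(t * s)) (x, 0, s, t) = (x, 0, s, 0) := by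
  have hss : s * s = 1 := Int.isUnit_mul_self hs
  simp only [twistB, mul_zero, add_zero, Prod.mk.injEq, true_and]
  linear_combination -t * hss

/-- If `x·s − y·t = ±1`, then some finite sequence of twist moves `A_m`, `B_n`
transforms `(x, y, s, t)` into a quadruple of the form `(x′, 0, s′, 0)`;
moreover, any quadruple `(x′, 0, s′, 0)` so reached satisfies
`x′·s′ = x·s − y·t`, hence `x′` and `s′` both lie in `{1, −1}`. -/
theorem hopf_pair_of_surgeries_realized_by_twists
    (x y s t : ℤ) (h : x * s - y * t = 1 ∨ x * s - y * t = -1) :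
    (∃ x' s' : ℤ, Relation.ReflTransGen quadStep (x, y, s, t) (x', 0, s', 0)) ∧
    (∀ x' s' : ℤ, Relation.ReflTransGen quadStep (x, y, s, t) (x', 0, s', 0) →
      x' * s' = x * s - y * t ∧ (x' = 1 ∨ x' = -1) ∧ (s' = 1 ∨ s' = -1)) := by
  have hunit : IsUnit (x * s - y * t) := Int.isUnit_iff.mpr h
  have hdiag {x' s' t' : ℤ} (hr : Relation.ReflTransGen quadStep (x, y, s, t) (x', 0, s', t')) :
      x' * s' = x * s - y * t ∧ IsUnit x' ∧ IsUnit s' := by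
    have hdet : x' * s' = x * s - y * t := by
      simpa [quadDet] using quadDet_eq_of_reflTransGen hr
    exact ⟨hdet, IsUnit.mul_iff.mp (hdet ▸ hunit)⟩
  refine ⟨?_, fun x' s' hr => ?_⟩
  · obtain ⟨⟨x', _, s', t'⟩, hr, rfl⟩ := exists_reflTransGen_snd_eq_zero (x, y, s, t)
    refine ⟨x', s', hr.tail ?_⟩
    rw [← twistB_eq_of_snd_eq_zero (hdiag hr).2.2]
    exact quadStep_twistB _ _
  · obtain ⟨hdet, hx', hs'⟩ := hdiag hr
    exact ⟨hdet, Int.isUnit_iff.mp hx', Int.isUnit_iff.mp hs'⟩
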